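/- arXiv:2503.18501 — 4 statements merged into one kernel-verified Lean document; each statement's English description precedes it below -/
import Mathlib

section
/- Let B be an invertible real m×m matrix and suppose B = T·W where T and W are invertible real symmetric m×m matrices. If the inertia of T differs from the inertia of W (i.e., the number of positive eigenvalues of T, counted with multiplicity, differs from the number of positive eigenvalues of W), then B has at least one real negative eigenvalue, i.e., the characteristic polynomial of B has a root λ ∈ ℝ with λ < 0. -/
open Matrix Polynomial

/-- Number of positive eigenvalues (counted with multiplicity, as roots of the
characteristic polynomial) of a real square matrix. -/
noncomputable def posEig {m : ℕ} (M : Matrix (Fin m) (Fin m) ℝ) : ℕ :=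
  (M.charpoly.roots.filter (fun x : ℝ => 0 < x)).card

/-!
On the segment `t ↦ (1 - t) • W⁻¹ + t • T = ((1 - t) • 1 + t • B) * W⁻¹` every matrix is symmetric,
and invertible as soon as `B` has no eigenvalue in `(-∞, 0]`. By Sylvester's law of inertia,
`posEig S` is the largest dimension of a subspace on which `x ↦ x ⬝ᵥ S *ᵥ x` is positive definite.
Positivity on a fixed subspace is an open condition, so `posEig` can only jump up under small
symmetric perturbations; so can `posEig (-S)`, while `posEig S + posEig (-S) = rank S`, which is
maximal at invertible `S`. Hence `posEig` is constant along the segment, and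
`posEig T = posEig W⁻¹ = posEig W`.
-/

open Finset Module Submodule Topology Filter

noncomputable def weightedSumSq {ι E : Type*} [Fintype ι] [AddCommGroup E] [Module ℝ E]
    (b : Basis ι ℝ E) (d : ι → ℝ) (x : E) : ℝ :=
  ∑ i, d i * b.repr x i ^ 2

section WeightedSumSq

variable {ι E : Type*} [Fintype ι] [AddCommGroup E] [Module ℝ E] (b : Basis ι ℝ E) (d : ι → ℝ)

lemma weightedSumSq_neg : weightedSumSq b (-d) = -weightedSumSq b d := by
  ext x
  simp [weightedSumSq]

lemma weightedSumSq_map {E' : Type*} [AddCommGroup E'] [Module ℝ E'] (f : E ≃ₗ[ℝ] E') (x : E') :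
    weightedSumSq (b.map f) d x = weightedSumSq b d (f.symm x) := by
  simp [weightedSumSq]

lemma finrank_span_basis_image (p : ι → Prop) [DecidablePred p] :
    finrank ℝ (span ℝ (b '' {i | p i})) = #{i | p i} := by
  rw [← Fintype.card_subtype,
    ← finrank_span_eq_card (b.linearIndependent.comp _ Subtype.val_injective), Set.range_comp,
    Subtype.range_coe_subtype]

lemma weightedSumSq_nonpos_of_mem_span {x : E} (hx : x ∈ span ℝ (b '' {i | d i ≤ 0})) :
    weightedSumSq b d x ≤ 0 := by
  rw [b.mem_span_image] at hx
  refine sum_nonpos fun i _ => ?_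
  by_cases hi : d i ≤ 0
  · exact mul_nonpos_of_nonpos_of_nonneg hi (sq_nonneg _)
  · rw [Finsupp.notMem_support_iff.mp fun h => hi (hx h)]
    simp

lemma weightedSumSq_pos_of_mem_span {x : E} (hx : x ∈ span ℝ (b '' {i | 0 < d i}))
    (hx0 : x ≠ 0) : 0 < weightedSumSq b d x := by
  rw [b.mem_span_image] at hx
  obtain ⟨j, hj⟩ : ∃ j, b.repr x j ≠ 0 := by
    by_contra! h
    exact hx0 (b.ext_elem fun i => by simp [h i])
  refine sum_pos' (fun i _ => ?_)
    ⟨j, mem_univ j, mul_pos (hx (Finsupp.mem_support_iff.mpr hj)) (by positivity)⟩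
  by_cases hi : 0 < d i
  · positivity
  · rw [Finsupp.notMem_support_iff.mp fun h => hi (hx h)]
    simp

lemma finrank_le_card_pos_of_weightedSumSq_pos {V : Submodule ℝ E}
    (hV : ∀ x ∈ V, x ≠ 0 → 0 < weightedSumSq b d x) : finrank ℝ V ≤ #{i | 0 < d i} := by
  have : FiniteDimensional ℝ E := b.finiteDimensional_of_finite
  have hdisj : Disjoint V (span ℝ (b '' {i | d i ≤ 0})) := by
    rw [disjoint_def]
    intro x hxV hxW
    by_contra hx0
    exact (hV x hxV hx0).not_ge (weightedSumSq_nonpos_of_mem_span b d hxW)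
  have hle := finrank_add_finrank_le_of_disjoint hdisj
  rw [finrank_span_basis_image, finrank_eq_card_basis b] at hle
  have hsplit := card_filter_add_card_filter_not (s := univ) (p := fun i => 0 < d i)
  simp only [not_lt, card_univ] at hsplit
  omega

lemma exists_finrank_eq_card_pos_weightedSumSq_pos :
    ∃ V : Submodule ℝ E, finrank ℝ V = #{i | 0 < d i} ∧
      ∀ x ∈ V, x ≠ 0 → 0 < weightedSumSq b d x :=
  ⟨_, finrank_span_basis_image b _, fun _ hx hx0 => weightedSumSq_pos_of_mem_span b d hx hx0⟩

/-- Sylvester's law of inertia. -/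
lemma card_pos_eq_of_weightedSumSq_eq {ι' : Type*} [Fintype ι'] (b' : Basis ι' ℝ E)
    (d' : ι' → ℝ) (h : weightedSumSq b d = weightedSumSq b' d') :
    #{i | 0 < d i} = #{i | 0 < d' i} := by
  obtain ⟨V, hV, hpos⟩ := exists_finrank_eq_card_pos_weightedSumSq_pos b d
  obtain ⟨V', hV', hpos'⟩ := exists_finrank_eq_card_pos_weightedSumSq_pos b' d'
  refine le_antisymm ?_ ?_
  · exact hV ▸ finrank_le_card_pos_of_weightedSumSq_pos b' d' (h ▸ hpos)
  · exact hV' ▸ finrank_le_card_pos_of_weightedSumSq_pos b d (h ▸ hpos')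

end WeightedSumSq

section QuadForm

variable {n : Type*} [Fintype n] {S : Matrix n n ℝ}

lemma dotProduct_diagonal_mulVec_self [DecidableEq n] (d y : n → ℝ) :
    y ⬝ᵥ diagonal d *ᵥ y = ∑ i, d i * y i ^ 2 := by
  simp only [mulVec_diagonal, dotProduct]
  exact sum_congr rfl fun i _ => by ring

lemma Matrix.IsHermitian.exists_basis_quadForm_eq [DecidableEq n] (hS : S.IsHermitian) :
    ∃ b : Basis n ℝ (n → ℝ), (fun x => x ⬝ᵥ S *ᵥ x) = weightedSumSq b hS.eigenvalues := by
  set U := hS.eigenvectorUnitary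
  refine ⟨Basis.ofEquivFun (UnitaryGroup.toLinearEquiv (star U)), funext fun x => ?_⟩
  have hU : x ᵥ* (U : Matrix n n ℝ) = star (U : Matrix n n ℝ) *ᵥ x := by
    rw [star_eq_conjTranspose, conjTranspose_eq_transpose_of_trivial, mulVec_transpose]
  conv_lhs => rw [hS.spectral_theorem, Unitary.conjStarAlgAut_apply]
  rw [← mulVec_mulVec, ← mulVec_mulVec, dotProduct_mulVec, hU]
  simp only [weightedSumSq, Basis.ofEquivFun_repr_apply]
  rw [RCLike.ofReal_real_eq_id, Function.id_comp, dotProduct_diagonal_mulVec_self]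
  rfl

lemma eventually_forall_pos_of_forall_pos {V : Submodule ℝ (n → ℝ)}
    (hV : ∀ x ∈ V, x ≠ 0 → 0 < x ⬝ᵥ S *ᵥ x) :
    ∀ᶠ S' in 𝓝 S, ∀ x ∈ V, x ≠ 0 → 0 < x ⬝ᵥ S' *ᵥ x := by
  have hK : IsCompact ((V : Set (n → ℝ)) ∩ Metric.sphere 0 1) :=
    (isCompact_sphere 0 1).inter_left V.closed_of_finiteDimensional
  have hQ : Continuous fun p : Matrix n n ℝ × (n → ℝ) => p.2 ⬝ᵥ p.1 *ᵥ p.2 := by fun_prop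
  have hev := hK.eventually_forall_of_forall_eventually (P := fun S' x => 0 < x ⬝ᵥ S' *ᵥ x)
    fun y hy => hQ.continuousAt.eventually_const_lt
      (hV y hy.1 (ne_zero_of_mem_unit_sphere ⟨y, hy.2⟩))
  filter_upwards [hev] with S' hS' x hx hx0
  have hunit := hS' (‖x‖⁻¹ • x) ⟨V.smul_mem _ hx, by simp [norm_smul, hx0]⟩
  rw [mulVec_smul, dotProduct_smul, smul_dotProduct, smul_smul, smul_eq_mul] at hunit
  exact pos_of_mul_pos_right hunit (by positivity)

end QuadForm

section PosEig

variable {m : ℕ} {S : Matrix (Fin m) (Fin m) ℝ}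

lemma posEig_eq_card_eigenvalues_pos (hS : S.IsHermitian) :
    posEig S = #{i | 0 < hS.eigenvalues i} := by
  rw [posEig, hS.roots_charpoly_eq_eigenvalues, Multiset.filter_map, Multiset.card_map]
  simp [Finset.card, Finset.filter_val]

lemma posEig_eq_card_of_quadForm_eq (hS : S.IsSymm) {ι : Type*} [Fintype ι]
    {b : Basis ι ℝ (Fin m → ℝ)} {d : ι → ℝ} (h : (fun x => x ⬝ᵥ S *ᵥ x) = weightedSumSq b d) :
    posEig S = #{i | 0 < d i} := by
  have hS' := isHermitian_iff_isSymm.mpr hS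
  obtain ⟨b₀, hb₀⟩ := hS'.exists_basis_quadForm_eq
  rw [posEig_eq_card_eigenvalues_pos hS']
  exact card_pos_eq_of_weightedSumSq_eq _ _ _ _ (hb₀.symm.trans h)

lemma finrank_le_posEig (hS : S.IsSymm) {V : Submodule ℝ (Fin m → ℝ)}
    (hV : ∀ x ∈ V, x ≠ 0 → 0 < x ⬝ᵥ S *ᵥ x) : finrank ℝ V ≤ posEig S := by
  obtain ⟨b, hb⟩ := (isHermitian_iff_isSymm.mpr hS).exists_basis_quadForm_eq
  rw [posEig_eq_card_of_quadForm_eq hS hb]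
  exact finrank_le_card_pos_of_weightedSumSq_pos b _ (hb ▸ hV)

lemma exists_finrank_eq_posEig (hS : S.IsSymm) :
    ∃ V : Submodule ℝ (Fin m → ℝ), finrank ℝ V = posEig S ∧
      ∀ x ∈ V, x ≠ 0 → 0 < x ⬝ᵥ S *ᵥ x := by
  have hS' := isHermitian_iff_isSymm.mpr hS
  obtain ⟨b, hb⟩ := hS'.exists_basis_quadForm_eq
  obtain ⟨V, hV, hpos⟩ := exists_finrank_eq_card_pos_weightedSumSq_pos b hS'.eigenvalues
  refine ⟨V, hV.trans (posEig_eq_card_of_quadForm_eq hS hb).symm, fun x hx hx0 => ?_⟩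
  exact (congrFun hb x).symm ▸ hpos x hx hx0

lemma posEig_add_posEig_neg (hS : S.IsSymm) : posEig S + posEig (-S) = S.rank := by
  have hS' := isHermitian_iff_isSymm.mpr hS
  obtain ⟨b, hb⟩ := hS'.exists_basis_quadForm_eq
  have hneg : (fun x => x ⬝ᵥ (-S) *ᵥ x) = weightedSumSq b (-hS'.eigenvalues) := by
    rw [weightedSumSq_neg, ← hb]
    ext x
    simp [neg_mulVec]
  rw [posEig_eq_card_of_quadForm_eq hS hb, posEig_eq_card_of_quadForm_eq hS.neg hneg,
    hS'.rank_eq_card_non_zero_eigs, Fintype.card_subtype, card_filter, card_filter, card_filter,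
    ← sum_add_distrib]
  refine sum_congr rfl fun i _ => ?_
  rcases lt_trichotomy (hS'.eigenvalues i) 0 with h | h | h
  · simp [h, h.ne, h.not_gt]
  · simp [h]
  · simp [h, h.ne', h.le]

/-- `x ⬝ᵥ S⁻¹ *ᵥ x = y ⬝ᵥ S *ᵥ y` for `y = S⁻¹ *ᵥ x`, so a diagonalization of the quadratic form
of `S` transported by `S` diagonalizes that of `S⁻¹` with the same weights. -/
lemma posEig_inv (hS : S.IsSymm) (hdet : IsUnit S.det) : posEig S⁻¹ = posEig S := by
  have hS' := isHermitian_iff_isSymm.mpr hS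
  obtain ⟨b, hb⟩ := hS'.exists_basis_quadForm_eq
  set e := (S⁻¹).toLinearEquiv (Pi.basisFun ℝ (Fin m)) (isUnit_nonsing_inv_det S hdet)
  have hinv : (fun x => x ⬝ᵥ S⁻¹ *ᵥ x) = weightedSumSq (b.map e.symm) hS'.eigenvalues := by
    ext x
    rw [weightedSumSq_map, LinearEquiv.symm_symm, ← hb]
    simp only [e, toLinearEquiv_apply, toLin_eq_toLin', toLin'_apply, mulVec_mulVec,
      mul_nonsing_inv S hdet, one_mulVec, dotProduct_comm x]
  rw [posEig_eq_card_of_quadForm_eq hS.inv hinv, posEig_eq_card_of_quadForm_eq hS hb]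

lemma eventually_posEig_le (hS : S.IsSymm) :
    ∀ᶠ S' in 𝓝 S, S'.IsSymm → posEig S ≤ posEig S' := by
  obtain ⟨V, hV, hpos⟩ := exists_finrank_eq_posEig hS
  filter_upwards [eventually_forall_pos_of_forall_pos hpos] with S' hS'pos hS'
  exact hV ▸ finrank_le_posEig hS' hS'pos

lemma eventually_posEig_eq (hS : S.IsSymm) (hdet : IsUnit S.det) :
    ∀ᶠ S' in 𝓝 S, S'.IsSymm → posEig S' = posEig S := by
  have hneg := (tendsto_neg S).eventually (eventually_posEig_le hS.neg)
  filter_upwards [eventually_posEig_le hS, hneg] with S' hle hle' hS'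
  have hrank : posEig S + posEig (-S) = m := by
    rw [posEig_add_posEig_neg hS, rank_of_isUnit S ((isUnit_iff_isUnit_det S).mpr hdet),
      Fintype.card_fin]
  have hrank' : posEig S' + posEig (-S') ≤ m := posEig_add_posEig_neg hS' ▸ rank_le_width S'
  have := hle hS'
  have := hle' hS'.neg
  omega

lemma posEig_eq_of_isPreconnected {X : Type*} [TopologicalSpace X] {s : Set X}
    (hs : IsPreconnected s) {γ : X → Matrix (Fin m) (Fin m) ℝ} (hγ : ContinuousOn γ s)
    (hsymm : ∀ t ∈ s, (γ t).IsSymm) (hdet : ∀ t ∈ s, IsUnit (γ t).det) {a b : X}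
    (ha : a ∈ s) (hb : b ∈ s) : posEig (γ a) = posEig (γ b) := by
  refine hs.constant (f := fun t => posEig (γ t)) (fun t ht => ?_) ha hb
  rw [ContinuousWithinAt, nhds_discrete, tendsto_pure]
  filter_upwards [(hγ t ht).eventually (eventually_posEig_eq (hsymm t ht) (hdet t ht)),
    self_mem_nhdsWithin] with u hu hus
  exact hu (hsymm u hus)

end PosEig

lemma isUnit_one_sub_smul_add_smul {A : Type*} [Ring A] [Algebra ℝ A] {B : A}
    (hB : ∀ μ ≤ 0, μ ∉ spectrum ℝ B) {t : ℝ} (ht : t ∈ Set.Icc (0 : ℝ) 1) :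
    IsUnit ((1 - t) • (1 : A) + t • B) := by
  rcases ht.1.eq_or_lt with rfl | ht0
  · simp
  have hμ : -(1 - t) / t ≤ 0 := div_nonpos_of_nonpos_of_nonneg (by linarith [ht.2]) ht0.le
  have key : (1 - t) • (1 : A) + t • B = (-t) • (algebraMap ℝ A (-(1 - t) / t) - B) := by
    have hc : -t * (-(1 - t) / t) = 1 - t := by field_simp
    rw [smul_sub, Algebra.algebraMap_eq_smul_one, smul_smul, hc, neg_smul, sub_neg_eq_add]
  rw [key, Algebra.smul_def]
  exact ((neg_ne_zero.mpr ht0.ne').isUnit.map _).mul (spectrum.notMem_iff.mp (hB _ hμ))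

theorem stmt_0_general {m : ℕ} (B T W : Matrix (Fin m) (Fin m) ℝ)
    (hB : IsUnit B.det) (hT : T.IsSymm) (hW : W.IsSymm)
    (hWinv : IsUnit W.det)
    (hBTW : B = T * W)
    (hinertia : posEig T ≠ posEig W) :
    ∃ lam : ℝ, lam < 0 ∧ B.charpoly.IsRoot lam := by
  by_contra! hroot
  have hspec : ∀ μ ≤ 0, μ ∉ spectrum ℝ B := by
    intro μ hμ
    rcases hμ.lt_or_eq with hμ | rfl
    · rw [mem_spectrum_iff_isRoot_charpoly]
      exact hroot μ hμ
    · exact (spectrum.zero_notMem_iff ℝ).mpr ((isUnit_iff_isUnit_det B).mpr hB)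
  set γ : ℝ → Matrix (Fin m) (Fin m) ℝ := fun t => (1 - t) • W⁻¹ + t • T
  have hγ (t : ℝ) : γ t = ((1 - t) • 1 + t • B) * W⁻¹ := by
    simp [γ, add_mul, hBTW, mul_assoc, mul_nonsing_inv W hWinv]
  have hpath := posEig_eq_of_isPreconnected isPreconnected_Icc (γ := γ) (by fun_prop)
    (fun t _ => (hW.inv.smul _).add (hT.smul _))
    (fun t ht => by
      rw [hγ, det_mul]
      exact ((isUnit_iff_isUnit_det _).mp (isUnit_one_sub_smul_add_smul hspec ht)).mul
        (isUnit_nonsing_inv_det W hWinv))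
    (Set.left_mem_Icc.mpr zero_le_one) (Set.right_mem_Icc.mpr zero_le_one)
  simp only [γ, sub_zero, one_smul, zero_smul, add_zero, sub_self, zero_add] at hpath
  exact hinertia (hpath.symm.trans (posEig_inv hW hWinv))

theorem stmt_0 {m : ℕ} (B T W : Matrix (Fin m) (Fin m) ℝ)
    (hB : IsUnit B.det) (hT : T.IsSymm) (hW : W.IsSymm)
    (hTinv : IsUnit T.det) (hWinv : IsUnit W.det)
    (hBTW : B = T * W)
    (hinertia : posEig T ≠ posEig W) :
    ∃ lam : ℝ, lam < 0 ∧ B.charpoly.IsRoot lam :=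
  stmt_0_general B T W hB hT hW hWinv hBTW hinertia
end

section
/- Let B be an invertible real m×m matrix with B = T·W where T and W are invertible real symmetric m×m matrices. If all m eigenvalues of B over ℂ are non-real (i.e., the characteristic polynomial of B has no real roots), then m is even and the inertia of T equals (m/2, m/2, 0) and the inertia of W equals (m/2, m/2, 0); that is, both T and W have exactly m/2 positive and m/2 negative eigenvalues counted with multiplicity. -/
/-!
Every matrix on the path `θ ↦ cos θ • T + sin θ • (Tᵀ * W * T)` is invertible, since it equals
`Tᵀ * (cos θ • 1 + sin θ • (W * T))` and `W * T` has the characteristic polynomial of `B = T * W`,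
which has no real root. The number of positive eigenvalues of a symmetric matrix is the largest
dimension of a subspace on which its quadratic form is positive definite (Sylvester); positive
definiteness on a fixed subspace is an open condition, so the inertia is locally constant on
invertible symmetric matrices, hence constant along the path. Comparing `θ = 0, π/2, π` gives
`inertia T = inertia (Tᵀ * W * T) = inertia W` and `inertia T = inertia (-T)`.
-/

open Matrix Polynomial

/-- Number of negative eigenvalues (counted with multiplicity). -/
noncomputable def negEig {m : ℕ} (M : Matrix (Fin m) (Fin m) ℝ) : ℕ :=
  (M.charpoly.roots.filter (fun x : ℝ => x < 0)).card

/-- Number of zero eigenvalues (counted with multiplicity). -/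
noncomputable def zeroEig {m : ℕ} (M : Matrix (Fin m) (Fin m) ℝ) : ℕ :=
  (M.charpoly.roots.filter (fun x : ℝ => x = 0)).card

open Module Filter Topology Finset

lemma Matrix.IsSymm.transpose_mul_mul {R n : Type*} [CommSemiring R] [Fintype n]
    {M : Matrix n n R} (P : Matrix n n R) (hM : M.IsSymm) : (Pᵀ * M * P).IsSymm := by
  simp [IsSymm, transpose_mul, hM.eq, Matrix.mul_assoc]

lemma dotProduct_transpose_mul_mul_mulVec {R n : Type*} [CommSemiring R] [Fintype n]
    (M P : Matrix n n R) (x : n → R) :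
    x ⬝ᵥ (Pᵀ * M * P) *ᵥ x = (P *ᵥ x) ⬝ᵥ M *ᵥ (P *ᵥ x) := by
  rw [← mulVec_mulVec, ← mulVec_mulVec, dotProduct_mulVec, vecMul_transpose]

lemma dotProduct_diagonal_mulVec {R n : Type*} [CommSemiring R] [Fintype n] [DecidableEq n]
    (d x : n → R) : x ⬝ᵥ diagonal d *ᵥ x = ∑ i, d i * x i ^ 2 := by
  simp only [dotProduct, mulVec_diagonal]
  exact Finset.sum_congr rfl fun i _ => by ring

section Definiteness

variable {R : Type*} [Field R] [LinearOrder R] {n : Type*} [Fintype n]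

def PosDefOn (M : Matrix n n R) (V : Submodule R (n → R)) : Prop :=
  ∀ x ∈ V, x ≠ 0 → 0 < x ⬝ᵥ M *ᵥ x

def posDefDims (M : Matrix n n R) : Set ℕ :=
  {k | ∃ V : Submodule R (n → R), PosDefOn M V ∧ finrank R V = k}

lemma PosDefOn.map_mulVecLin {M P : Matrix n n R} {V : Submodule R (n → R)}
    (h : PosDefOn (Pᵀ * M * P) V) : PosDefOn M (V.map P.mulVecLin) := by
  rintro _ ⟨x, hx, rfl⟩ hx0
  have hx0' : x ≠ 0 := by rintro rfl; simp at hx0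
  simpa [dotProduct_transpose_mul_mul_mulVec] using h x hx hx0'

lemma posDefDims_transpose_mul_mul_subset {M P : Matrix n n R}
    (hP : Function.Injective P.mulVec) : posDefDims (Pᵀ * M * P) ⊆ posDefDims M := by
  rintro _ ⟨V, hV, rfl⟩
  exact ⟨_, hV.map_mulVecLin, (Submodule.equivMapOfInjective _ hP V).finrank_eq.symm⟩

variable [DecidableEq n]

lemma posDefDims_transpose_mul_mul (M : Matrix n n R) {P : Matrix n n R}
    (hP : IsUnit P.det) : posDefDims (Pᵀ * M * P) = posDefDims M := by
  have hinj {Q : Matrix n n R} (hQ : IsUnit Q.det) : Function.Injective Q.mulVec :=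
    mulVec_injective_iff_isUnit.mpr ((isUnit_iff_isUnit_det Q).mpr hQ)
  have hM : M = P⁻¹ᵀ * (Pᵀ * M * P) * P⁻¹ := by
    rw [transpose_nonsing_inv, ← Matrix.mul_assoc, ← Matrix.mul_assoc,
      nonsing_inv_mul _ (by rwa [det_transpose]), Matrix.one_mul, Matrix.mul_assoc,
      mul_nonsing_inv _ hP, Matrix.mul_one]
  refine (posDefDims_transpose_mul_mul_subset (hinj hP)).antisymm ?_
  conv_lhs => rw [hM]
  exact posDefDims_transpose_mul_mul_subset (hinj (isUnit_nonsing_inv_det P hP))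

lemma isGreatest_posDefDims_diagonal [IsStrictOrderedRing R] (d : n → R) :
    IsGreatest (posDefDims (diagonal d)) #{i | 0 < d i} := by
  constructor
  · let π := LinearMap.funLeft R R (Subtype.val : {i // ¬ 0 < d i} → n)
    have hπ : Function.Surjective π :=
      LinearMap.funLeft_surjective_of_injective _ _ _ Subtype.val_injective
    refine ⟨LinearMap.ker π, fun x hx hx0 => ?_, ?_⟩
    · have hzero : ∀ i, ¬ 0 < d i → x i = 0 := fun i hi => congrFun hx ⟨i, hi⟩
      obtain ⟨j, hj⟩ := Function.ne_iff.mp hx0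
      have hj : x j ≠ 0 := hj
      have hdj : 0 < d j := by_contra fun h => hj (hzero j h)
      rw [dotProduct_diagonal_mulVec]
      refine Finset.sum_pos' (fun i _ => ?_) ⟨j, Finset.mem_univ j, by positivity⟩
      by_cases hi : 0 < d i
      · positivity
      · simp [hzero i hi]
    · have := LinearMap.finrank_range_add_finrank_ker π
      rw [LinearMap.range_eq_top.mpr hπ, finrank_top] at this
      simp only [finrank_fintype_fun_eq_card, Fintype.card_subtype] at this
      have := Finset.card_filter_add_card_filter_not (s := univ) (fun i => 0 < d i)
      simp only [card_univ] at this
      omega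
  · rintro _ ⟨V, hV, rfl⟩
    have hinj : Function.Injective
        ((LinearMap.funLeft R R (Subtype.val : {i // 0 < d i} → n)) ∘ₗ V.subtype) := by
      rw [← LinearMap.ker_eq_bot, Submodule.eq_bot_iff]
      rintro ⟨x, hxV⟩ hx
      by_contra hx0
      have hpos := hV x hxV (by simpa using hx0)
      have hzero : ∀ i, 0 < d i → x i = 0 := fun i hi => congrFun hx ⟨i, hi⟩
      rw [dotProduct_diagonal_mulVec] at hpos
      refine hpos.not_ge (Finset.sum_nonpos fun i _ => ?_)
      by_cases hi : 0 < d i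
      · simp [hzero i hi]
      · exact mul_nonpos_of_nonpos_of_nonneg (not_lt.mp hi) (sq_nonneg _)
    simpa [Fintype.card_subtype] using LinearMap.finrank_le_finrank_of_injective hinj

end Definiteness

lemma PosDefOn.eventually {n : Type*} [Fintype n] {M : Matrix n n ℝ} {V : Submodule ℝ (n → ℝ)}
    (h : PosDefOn M V) : ∀ᶠ N in 𝓝 M, PosDefOn N V := by
  have hK : IsCompact (Metric.sphere (0 : n → ℝ) 1 ∩ V) :=
    (isCompact_sphere 0 1).inter_right V.closed_of_finiteDimensional
  have hcont : Continuous fun p : Matrix n n ℝ × (n → ℝ) => p.2 ⬝ᵥ p.1 *ᵥ p.2 :=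
    continuous_snd.dotProduct (continuous_fst.matrix_mulVec continuous_snd)
  have hsphere : ∀ᶠ N in 𝓝 M, ∀ y ∈ Metric.sphere (0 : n → ℝ) 1 ∩ V, 0 < y ⬝ᵥ N *ᵥ y :=
    hK.eventually_forall_of_forall_eventually fun y hy =>
      hcont.continuousAt.eventually
        (lt_mem_nhds (h y hy.2 (ne_zero_of_mem_unit_sphere ⟨y, hy.1⟩)))
  filter_upwards [hsphere] with N hN x hx hx0
  have hxn : 0 < ‖x‖ := norm_pos_iff.mpr hx0
  have hunit := hN (‖x‖⁻¹ • x) ⟨by simp [norm_smul, hxn.ne'], V.smul_mem _ hx⟩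
  rw [mulVec_smul, dotProduct_smul, smul_dotProduct, smul_smul, smul_eq_mul] at hunit
  exact (mul_pos_iff_of_pos_left (by positivity)).mp hunit

section Eigenvalues

variable {n : Type*} [Fintype n] [DecidableEq n] {M : Matrix n n ℝ}

lemma card_filter_roots_charpoly (hM : M.IsHermitian) (p : ℝ → Prop) [DecidablePred p] :
    (M.charpoly.roots.filter p).card = #{i | p (hM.eigenvalues i)} := by
  rw [hM.roots_charpoly_eq_eigenvalues, Multiset.filter_map, Multiset.card_map]
  rfl

lemma transpose_eigenvectorUnitary_mul_mul (hM : M.IsHermitian) :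
    (hM.eigenvectorUnitary : Matrix n n ℝ)ᵀ * M * hM.eigenvectorUnitary =
      diagonal hM.eigenvalues := by
  simpa [star_eq_conjTranspose] using hM.conjStarAlgAut_star_eigenvectorUnitary

lemma isUnit_det_eigenvectorUnitary (hM : M.IsHermitian) :
    IsUnit (hM.eigenvectorUnitary : Matrix n n ℝ).det :=
  isUnit_det_of_left_inverse (Unitary.coe_star_mul_self hM.eigenvectorUnitary)

lemma eigenvalues_ne_zero (hM : M.IsHermitian) (hdet : IsUnit M.det) (i : n) :
    hM.eigenvalues i ≠ 0 := by
  rw [isUnit_iff_ne_zero, hM.det_eq_prod_eigenvalues] at hdet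
  exact fun h => hdet (Finset.prod_eq_zero (Finset.mem_univ i) (by simp [h]))

end Eigenvalues

section Inertia

variable {m : ℕ} {M : Matrix (Fin m) (Fin m) ℝ}

lemma isGreatest_posDefDims_posEig (hM : M.IsSymm) : IsGreatest (posDefDims M) (posEig M) := by
  have hH := isHermitian_iff_isSymm.mpr hM
  rw [posEig, card_filter_roots_charpoly hH,
    ← posDefDims_transpose_mul_mul M (isUnit_det_eigenvectorUnitary hH),
    transpose_eigenvectorUnitary_mul_mul]
  exact isGreatest_posDefDims_diagonal _

lemma isGreatest_posDefDims_neg_negEig (hM : M.IsSymm) :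
    IsGreatest (posDefDims (-M)) (negEig M) := by
  have hH := isHermitian_iff_isSymm.mpr hM
  rw [negEig, card_filter_roots_charpoly hH,
    ← posDefDims_transpose_mul_mul (-M) (isUnit_det_eigenvectorUnitary hH), Matrix.mul_neg,
    Matrix.neg_mul, transpose_eigenvectorUnitary_mul_mul, diagonal_neg]
  simpa using isGreatest_posDefDims_diagonal fun i => -hH.eigenvalues i

lemma negEig_eq_posEig_neg (hM : M.IsSymm) : negEig M = posEig (-M) :=
  (isGreatest_posDefDims_neg_negEig hM).unique (isGreatest_posDefDims_posEig hM.neg)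

lemma posEig_transpose_mul_mul (hM : M.IsSymm) {P : Matrix (Fin m) (Fin m) ℝ}
    (hP : IsUnit P.det) : posEig (Pᵀ * M * P) = posEig M :=
  (isGreatest_posDefDims_posEig (hM.transpose_mul_mul P)).unique
    (posDefDims_transpose_mul_mul M hP ▸ isGreatest_posDefDims_posEig hM)

lemma posEig_add_negEig (hM : M.IsSymm) (hdet : IsUnit M.det) : posEig M + negEig M = m := by
  have hH := isHermitian_iff_isSymm.mpr hM
  rw [posEig, negEig, card_filter_roots_charpoly hH, card_filter_roots_charpoly hH,
    ← card_union_of_disjoint (disjoint_filter.mpr fun _ _ h => (lt_asymm h)),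
    ← filter_or, filter_true_of_mem fun i _ => (eigenvalues_ne_zero hH hdet i).lt_or_gt.symm,
    card_univ, Fintype.card_fin]

lemma zeroEig_eq_zero (hM : M.IsSymm) (hdet : IsUnit M.det) : zeroEig M = 0 := by
  rw [zeroEig, card_filter_roots_charpoly (isHermitian_iff_isSymm.mpr hM),
    card_eq_zero, filter_eq_empty_iff]
  exact fun i _ => eigenvalues_ne_zero _ hdet i

lemma eventually_posEig_le_s5 (hM : M.IsSymm) : ∀ᶠ N in 𝓝 M, N.IsSymm → posEig M ≤ posEig N := by
  obtain ⟨⟨V, hV, hdim⟩, -⟩ := isGreatest_posDefDims_posEig hM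
  filter_upwards [hV.eventually] with N hN hNsymm
  exact hdim ▸ (isGreatest_posDefDims_posEig hNsymm).2 ⟨V, hN, rfl⟩

lemma eventually_negEig_le (hM : M.IsSymm) : ∀ᶠ N in 𝓝 M, N.IsSymm → negEig M ≤ negEig N := by
  filter_upwards [(continuous_neg.tendsto M).eventually (eventually_posEig_le_s5 hM.neg)]
    with N hN hNsymm
  rw [negEig_eq_posEig_neg hM, negEig_eq_posEig_neg hNsymm]
  exact hN hNsymm.neg

lemma posEig_eq_of_continuous {X : Type*} [TopologicalSpace X] [PreconnectedSpace X]
    {f : X → Matrix (Fin m) (Fin m) ℝ} (hf : Continuous f) (hsymm : ∀ x, (f x).IsSymm)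
    (hdet : ∀ x, IsUnit (f x).det) (x y : X) : posEig (f x) = posEig (f y) := by
  refine IsLocallyConstant.apply_eq_of_preconnectedSpace (f := posEig ∘ f)
    ((IsLocallyConstant.iff_eventually_eq _).mpr fun x => ?_) x y
  filter_upwards [hf.continuousAt.eventually (eventually_posEig_le_s5 (hsymm x)),
    hf.continuousAt.eventually (eventually_negEig_le (hsymm x))] with y hpos hneg
  have := posEig_add_negEig (hsymm x) (hdet x)
  have := posEig_add_negEig (hsymm y) (hdet y)
  have := hpos (hsymm y)
  have := hneg (hsymm y)
  simp only [Function.comp_apply]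
  omega

end Inertia

lemma isUnit_det_smul_one_add_smul {K n : Type*} [Field K] [Fintype n] [DecidableEq n]
    {A : Matrix n n K} (hA : ∀ x : K, ¬ A.charpoly.IsRoot x) {a b : K} (hab : a ≠ 0 ∨ b ≠ 0) :
    IsUnit (a • (1 : Matrix n n K) + b • A).det := by
  rw [isUnit_iff_ne_zero]
  rcases eq_or_ne b 0 with rfl | hb
  · simp [hab.resolve_right (not_not.mpr rfl)]
  · have hpencil : a • (1 : Matrix n n K) + b • A = (-b) • (scalar n (-a / b) - A) := by
      rw [scalar_apply, ← smul_one_eq_diagonal, smul_sub, smul_smul,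
        show -b * (-a / b) = a by field_simp, neg_smul, sub_neg_eq_add]
    rw [hpencil, det_smul, ← eval_charpoly]
    exact mul_ne_zero (pow_ne_zero _ (neg_ne_zero.mpr hb)) (hA _)

theorem stmt_5_general {m : ℕ} (B T W : Matrix (Fin m) (Fin m) ℝ)
    (hT : T.IsSymm) (hW : W.IsSymm)
    (hTinv : IsUnit T.det) (hWinv : IsUnit W.det)
    (hBTW : B = T * W)
    (hnoreal : ∀ x : ℝ, ¬ B.charpoly.IsRoot x) :
    Even m ∧
    posEig T = m / 2 ∧ negEig T = m / 2 ∧ zeroEig T = 0 ∧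
    posEig W = m / 2 ∧ negEig W = m / 2 ∧ zeroEig W = 0 := by
  have hWT : ∀ x : ℝ, ¬ (W * T).charpoly.IsRoot x := by rwa [charpoly_mul_comm, ← hBTW]
  have hpencil (θ : ℝ) : IsUnit (Real.cos θ • T + Real.sin θ • (Tᵀ * W * T)).det := by
    have hcs : Real.cos θ ≠ 0 ∨ Real.sin θ ≠ 0 := by
      by_contra! h
      simpa [h.1, h.2] using Real.cos_sq_add_sin_sq θ
    rw [show Real.cos θ • T + Real.sin θ • (Tᵀ * W * T) =
        Tᵀ * (Real.cos θ • 1 + Real.sin θ • (W * T)) by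
      rw [Matrix.mul_add, mul_smul_comm, mul_smul_comm, Matrix.mul_one, hT.eq, Matrix.mul_assoc],
      det_mul, det_transpose]
    exact hTinv.mul (isUnit_det_smul_one_add_smul hWT hcs)
  have hconst := posEig_eq_of_continuous (by fun_prop) (fun θ => (hT.smul _).add
    ((hW.transpose_mul_mul T).smul _)) hpencil
  have hTW : posEig T = posEig W := by
    simpa [posEig_transpose_mul_mul hW hTinv] using hconst 0 (Real.pi / 2)
  have hTnegT : posEig T = negEig T := by
    simpa [negEig_eq_posEig_neg hT] using hconst 0 Real.pi
  have hT' := posEig_add_negEig hT hTinv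
  have hW' := posEig_add_negEig hW hWinv
  exact ⟨⟨posEig T, by omega⟩, by omega, by omega, zeroEig_eq_zero hT hTinv, by omega, by omega,
    zeroEig_eq_zero hW hWinv⟩

theorem stmt_5 {m : ℕ} (B T W : Matrix (Fin m) (Fin m) ℝ)
    (hB : IsUnit B.det) (hT : T.IsSymm) (hW : W.IsSymm)
    (hTinv : IsUnit T.det) (hWinv : IsUnit W.det)
    (hBTW : B = T * W)
    (hnoreal : ∀ x : ℝ, ¬ B.charpoly.IsRoot x) :
    Even m ∧
    posEig T = m / 2 ∧ negEig T = m / 2 ∧ zeroEig T = 0 ∧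
    posEig W = m / 2 ∧ negEig W = m / 2 ∧ zeroEig W = 0 :=
  stmt_5_general B T W hT hW hTinv hWinv hBTW hnoreal
end

section
/- Let T and W be real symmetric m×m matrices with T invertible, and suppose θ̂ ∈ (0,1) is such that the real symmetric matrix V(θ̂) = θ̂·W + (1 − θ̂)·T⁻¹ has kernel of dimension r ≥ 1. Then λ̂ = (θ̂ − 1)/θ̂ is a negative real eigenvalue of B = T·W whose eigenspace (the kernel of B − λ̂·I) has dimension at least r; indeed, every vector in the kernel of V(θ̂) is an eigenvector of B for the eigenvalue λ̂. -/
open Matrix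

theorem stmt_9 {m : ℕ} (T W : Matrix (Fin m) (Fin m) ℝ)
    (hT : T.IsSymm) (hW : W.IsSymm) (hTinv : IsUnit T.det)
    (θ : ℝ) (hθ : θ ∈ Set.Ioo (0 : ℝ) 1) (r : ℕ) (hr : 1 ≤ r)
    (hker : Module.finrank ℝ
      (LinearMap.ker (θ • W + (1 - θ) • T⁻¹).mulVecLin) = r) :
    (θ - 1) / θ < 0 ∧
    r ≤ Module.finrank ℝ
      (LinearMap.ker
        (T * W - ((θ - 1) / θ) • (1 : Matrix (Fin m) (Fin m) ℝ)).mulVecLin) ∧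
    ∀ x : Fin m → ℝ, (θ • W + (1 - θ) • T⁻¹).mulVec x = 0 →
      (T * W).mulVec x = ((θ - 1) / θ) • x := by
  obtain ⟨hθ0, hθ1⟩ := hθ
  have hθne : θ ≠ 0 := ne_of_gt hθ0
  have key : ∀ x : Fin m → ℝ, (θ • W + (1 - θ) • T⁻¹).mulVec x = 0 →
      (T * W).mulVec x = ((θ - 1) / θ) • x := by
    intro x hx
    have h1 : θ • W.mulVec x + (1 - θ) • T⁻¹.mulVec x = 0 := by
      simpa [add_mulVec, smul_mulVec] using hx
    have h3 : θ • W.mulVec x = (θ - 1) • T⁻¹.mulVec x := by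
      linear_combination (norm := module) h1
    have h2 : W.mulVec x = ((θ - 1) / θ) • T⁻¹.mulVec x := by
      have := congrArg (fun v => θ⁻¹ • v) h3
      simp only [smul_smul, inv_mul_cancel₀ hθne, one_smul] at this
      rw [this, div_eq_inv_mul]
    calc (T * W).mulVec x = T.mulVec (W.mulVec x) := by
          rw [← mulVec_mulVec]
      _ = ((θ - 1) / θ) • (T * T⁻¹).mulVec x := by
          rw [h2, mulVec_smul, mulVec_mulVec]
      _ = ((θ - 1) / θ) • x := by
          rw [mul_nonsing_inv T hTinv, one_mulVec]
  refine ⟨div_neg_of_neg_of_pos (by linarith) hθ0, ?_, key⟩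
  rw [← hker]
  apply Submodule.finrank_mono
  intro x hx
  simp only [LinearMap.mem_ker, mulVecLin_apply] at hx ⊢
  have := key x hx
  rw [sub_mulVec, this, smul_mulVec, one_mulVec, sub_self]
end

section
/- Every real m×m matrix B can be written as B = T·W where T and W are real symmetric m×m matrices. -/
/-!
Frobenius: every square matrix `B` over a field is conjugate to its transpose by a symmetric
invertible `S`, i.e. `Bᵀ * S = S * B`, and then `B = (B * S⁻¹) * S` with both factors symmetric.
Such an `S` is the Gram matrix of a nondegenerate symmetric bilinear form for which `B` is
self-adjoint. To build one, view `Kⁿ` as a torsion `K[X]`-module with `X` acting by `B` and split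
it into cyclic pieces `K[X] ⧸ (q)` with `q` monic of degree `d`; on each piece the form
`(u, v) ↦ coefficient of X^(d-1) in the reduced product uv` works, and the pieces add up.
-/

open Matrix Polynomial

def IsSelfAdjointForSymmForm (K : Type*) {M : Type*} [Field K] [AddCommGroup M] [Module K M]
    (f : M → M) : Prop :=
  ∃ Φ : LinearMap.BilinForm K M, Φ.IsSymm ∧ Φ.SeparatingLeft ∧ Φ.IsSelfAdjoint f

variable {K : Type*} [Field K]

namespace IsSelfAdjointForSymmForm

theorem of_conj {M N : Type*} [AddCommGroup M] [Module K M] [AddCommGroup N] [Module K N]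
    (e : M ≃ₗ[K] N) {f : M → M} {g : N → N} (hfg : ∀ x, e (f x) = g (e x))
    (h : IsSelfAdjointForSymmForm K g) : IsSelfAdjointForSymmForm K f := by
  obtain ⟨Φ, hsymm, hsep, hg⟩ := h
  refine ⟨Φ.compl₁₂ e.toLinearMap e.toLinearMap, ⟨fun x y ↦ hsymm.eq _ _⟩, ?_, fun x y ↦ ?_⟩
  · intro x hx
    exact e.map_eq_zero_iff.mp (hsep _ fun y ↦ by simpa using hx (e.symm y))
  · simpa [hfg] using hg (e x) (e y)

theorem pi {ι : Type*} [Fintype ι] [DecidableEq ι] {N : ι → Type*} [∀ i, AddCommGroup (N i)]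
    [∀ i, Module K (N i)] {f : ∀ i, N i → N i} (h : ∀ i, IsSelfAdjointForSymmForm K (f i)) :
    IsSelfAdjointForSymmForm K fun (x : ∀ i, N i) i ↦ f i (x i) := by
  choose φ hsymm hsep hf using h
  let Φ : LinearMap.BilinForm K (∀ i, N i) :=
    ∑ i, (φ i).compl₁₂ (LinearMap.proj i) (LinearMap.proj i)
  have hΦ : ∀ x y, Φ x y = ∑ i, φ i (x i) (y i) := fun x y ↦ by simp [Φ]
  refine ⟨Φ, ⟨fun x y ↦ by simp only [hΦ, (hsymm _).eq]⟩, ?_, fun x y ↦ ?_⟩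
  · intro x hx
    funext i
    refine hsep i (x i) fun v ↦ ?_
    rw [← hx (Pi.single i v), hΦ, Finset.sum_eq_single i (fun j _ hj ↦ by simp [hj]) (by simp)]
    simp
  · simp only [hΦ, hf _ _ _]

theorem X_smul_of_linearEquiv {M N : Type*} [AddCommGroup M] [Module K M] [Module K[X] M]
    [IsScalarTower K K[X] M] [AddCommGroup N] [Module K N] [Module K[X] N] [IsScalarTower K K[X] N]
    (e : M ≃ₗ[K[X]] N) (h : IsSelfAdjointForSymmForm K fun y : N ↦ (X : K[X]) • y) :
    IsSelfAdjointForSymmForm K fun x : M ↦ (X : K[X]) • x :=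
  .of_conj (e.restrictScalars K) (fun x ↦ e.map_smul X x) h

end IsSelfAdjointForSymmForm

theorem AdjoinRoot.exists_coeff_modByMonicHom_mul_ne_zero {q : K[X]} (hq : q.Monic)
    {u : AdjoinRoot q} (hu : u ≠ 0) :
    ∃ v, (modByMonicHom hq (u * v)).coeff (q.natDegree - 1) ≠ 0 := by
  obtain ⟨f, rfl⟩ := mk_surjective u
  set r := f %ₘ q
  have hur : mk q r = mk q f := mk_leftInverse hq (mk q f)
  have hr : r ≠ 0 := by rintro h; exact hu (by rw [← hur, h, map_zero])
  have hd : r.natDegree < q.natDegree :=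
    natDegree_modByMonic_lt f hq fun h ↦ hr (by simp [r, h])
  set k := q.natDegree - 1 - r.natDegree
  have hrk : (r * X ^ k) %ₘ q = r * X ^ k := by
    rw [modByMonic_eq_self_iff hq]
    exact degree_lt_degree (by rw [natDegree_mul_X_pow k hr]; omega)
  refine ⟨mk q (X ^ k), ?_⟩
  rw [← hur, ← map_mul, modByMonicHom_mk, hrk, show q.natDegree - 1 = r.natDegree + k by omega,
    coeff_mul_X_pow]
  exact leadingCoeff_ne_zero.mpr hr

theorem isSelfAdjointForSymmForm_X_smul_quotient_of_monic {q : K[X]} (hq : q.Monic) :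
    IsSelfAdjointForSymmForm K fun u : K[X] ⧸ K[X] ∙ q ↦ (X : K[X]) • u := by
  -- `K[X] ⧸ K[X] ∙ q` is `AdjoinRoot q` by definition
  let ℓ : (K[X] ⧸ K[X] ∙ q) →ₗ[K] K :=
    (lcoeff K (q.natDegree - 1)).comp (AdjoinRoot.modByMonicHom hq)
  refine ⟨(LinearMap.mul K _).compr₂ ℓ, ⟨fun u v ↦ by simp [mul_comm]⟩, ?_, fun u v ↦ ?_⟩
  · intro u hu
    by_contra h
    obtain ⟨v, hv⟩ := AdjoinRoot.exists_coeff_modByMonicHom_mul_ne_zero (u := u) hq h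
    exact hv (hu v)
  · simp only [LinearMap.compr₂_apply, LinearMap.mul_apply', smul_mul_assoc, mul_smul_comm]

theorem isSelfAdjointForSymmForm_X_smul_quotient {q : K[X]} (hq : q ≠ 0) :
    IsSelfAdjointForSymmForm K fun u : K[X] ⧸ K[X] ∙ q ↦ (X : K[X]) • u := by
  have hspan : K[X] ∙ q = K[X] ∙ (q * C q.leadingCoeff⁻¹) :=
    (Ideal.span_singleton_mul_right_unit (isUnit_C.mpr (by simpa using hq)) q).symm
  exact .X_smul_of_linearEquiv (Submodule.quotEquivOfEq _ _ hspan)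
    (isSelfAdjointForSymmForm_X_smul_quotient_of_monic (monic_mul_leadingCoeff_inv hq))

theorem isSelfAdjointForSymmForm_X_smul_of_isTorsion {M : Type*} [AddCommGroup M] [Module K M]
    [Module K[X] M] [IsScalarTower K K[X] M] [Module.Finite K[X] M]
    (hM : Module.IsTorsion K[X] M) : IsSelfAdjointForSymmForm K fun x : M ↦ (X : K[X]) • x := by
  classical
  obtain ⟨ι, _, p, hp, e, ⟨φ⟩⟩ := Module.equiv_directSum_of_isTorsion hM
  exact .X_smul_of_linearEquiv (φ.trans (DirectSum.linearEquivFunOnFintype K[X] ι _))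
    (.pi fun i ↦ isSelfAdjointForSymmForm_X_smul_quotient (pow_ne_zero _ (hp i).ne_zero))

theorem isSelfAdjointForSymmForm_of_finiteDimensional {M : Type*} [AddCommGroup M] [Module K M]
    [FiniteDimensional K M] (f : M →ₗ[K] M) : IsSelfAdjointForSymmForm K f :=
  .of_conj (Module.AEval'.of f) (fun x ↦ (Module.AEval'.X_smul_of f x).symm)
    (isSelfAdjointForSymmForm_X_smul_of_isTorsion
      (Module.AEval.isTorsion_of_finiteDimensional K M f))

theorem Matrix.exists_isSymm_isUnit_det_transpose_mul_eq {n : Type*} [Fintype n] [DecidableEq n]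
    (B : Matrix n n K) : ∃ S : Matrix n n K, S.IsSymm ∧ IsUnit S.det ∧ Bᵀ * S = S * B := by
  obtain ⟨Φ, hsymm, hsep, hB⟩ := isSelfAdjointForSymmForm_of_finiteDimensional (toLin' B)
  refine ⟨Φ.toMatrix', LinearMap.BilinForm.isSymm_toMatrix'_iff_isSymm.mpr hsymm,
    (separatingLeft_iff_det_ne_zero.mp
      (LinearMap.BilinForm.separatingLeft_toMatrix'_iff.mpr hsep)).isUnit, ?_⟩
  rw [← Matrix.toLinearMap₂'_toMatrix' (R := K) Φ] at hB
  exact (isAdjointPair_toLinearMap₂' _ _ _ _).mp hB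

theorem Matrix.exists_eq_isSymm_mul_isSymm {n : Type*} [Fintype n] [DecidableEq n]
    (B : Matrix n n K) : ∃ T W : Matrix n n K, T.IsSymm ∧ W.IsSymm ∧ B = T * W := by
  obtain ⟨S, hS, hdet, hBS⟩ := B.exists_isSymm_isUnit_det_transpose_mul_eq
  refine ⟨B * S⁻¹, S, ?_, hS, by rw [Matrix.mul_assoc, nonsing_inv_mul S hdet, Matrix.mul_one]⟩
  calc (B * S⁻¹)ᵀ = S⁻¹ * (Bᵀ * S) * S⁻¹ := by
        rw [transpose_mul, transpose_nonsing_inv, hS, Matrix.mul_assoc, Matrix.mul_assoc,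
          mul_nonsing_inv S hdet, Matrix.mul_one]
    _ = B * S⁻¹ := by rw [hBS, ← Matrix.mul_assoc, nonsing_inv_mul S hdet, Matrix.one_mul]

theorem stmt_13 {m : ℕ} (B : Matrix (Fin m) (Fin m) ℝ) :
    ∃ T W : Matrix (Fin m) (Fin m) ℝ, T.IsSymm ∧ W.IsSymm ∧ B = T * W :=
  B.exists_eq_isSymm_mul_isSymm
end
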